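/- For every n ≥ 1, the joint distribution of the triple of statistics (plat(σ), des(σ)+1, asc(σ)+1) on the set Q_n(213) is symmetric: for all nonnegative integers a, b, c and every rearrangement (a', b', c') of (a, b, c), the number of σ ∈ Q_n(213) with plat(σ) = a, des(σ)+1 = b and asc(σ)+1 = c equals the number of σ ∈ Q_n(213) with plat(σ) = a', des(σ)+1 = b' and asc(σ)+1 = c'. -/

import Mathlib

open scoped Classical

/-- `σ` is a Stirling permutation of order `n`: each letter `1,…,n` occurs
exactly twice and every entry strictly between the two occurrences of a letter
is greater than that letter. -/
def IsStirling (n : ℕ) (σ : List ℕ) : Prop :=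
  (∀ i : ℕ, σ.count i = if 1 ≤ i ∧ i ≤ n then 2 else 0) ∧
  (∀ j k l : ℕ, j < k → k < l → l < σ.length →
    σ.getD j 0 = σ.getD l 0 → σ.getD j 0 < σ.getD k 0)

/-- `σ` contains the pattern word `τ`. -/
def Contains (σ τ : List ℕ) : Prop :=
  ∃ ι : Fin τ.length → Fin σ.length, StrictMono ι ∧
    ∀ s t : Fin τ.length, τ.get s < τ.get t ↔ σ.get (ι s) < σ.get (ι t)

/-- `σ` avoids the pattern word `τ`. -/
def Avoids (σ τ : List ℕ) : Prop := ¬ Contains σ τ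

/-- Number of adjacent pairs of `σ` satisfying the relation `R`. -/
noncomputable def statCount (R : ℕ → ℕ → Prop) (σ : List ℕ) : ℕ :=
  Set.ncard {i : ℕ | i + 1 < σ.length ∧ R (σ.getD i 0) (σ.getD (i + 1) 0)}

/-- Number of descents. -/
noncomputable def desStat (σ : List ℕ) : ℕ := statCount (· > ·) σ
/-- Number of ascents. -/
noncomputable def ascStat (σ : List ℕ) : ℕ := statCount (· < ·) σ
/-- Number of plateaus. -/
noncomputable def platStat (σ : List ℕ) : ℕ := statCount (· = ·) σ


noncomputable def adjP (R : ℕ → ℕ → Prop) : List ℕ → ℕ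
  | x :: y :: t => (if R x y then 1 else 0) + adjP R (y :: t)
  | _ => 0

lemma adjP_nil (R : ℕ → ℕ → Prop) : adjP R [] = 0 := rfl
lemma adjP_single (R : ℕ → ℕ → Prop) (x : ℕ) : adjP R [x] = 0 := rfl
lemma adjP_cons_cons (R : ℕ → ℕ → Prop) (x y : ℕ) (l : List ℕ) :
    adjP R (x :: y :: l) = (if R x y then 1 else 0) + adjP R (y :: l) := rfl

lemma statCount_eq (R : ℕ → ℕ → Prop) (σ : List ℕ) : statCount R σ = adjP R σ := by
  induction σ with
  | nil => simp [statCount, adjP]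
  | cons x l ih =>
    cases l with
    | nil => simp [statCount, adjP]
    | cons y t =>
      rw [adjP_cons_cons, ← ih]
      have hset : {i : ℕ | i + 1 < (x :: y :: t).length ∧
          R ((x :: y :: t).getD i 0) ((x :: y :: t).getD (i + 1) 0)} =
          (if R x y then {0} else (∅ : Set ℕ)) ∪
          (fun i => i + 1) '' {i : ℕ | i + 1 < (y :: t).length ∧
            R ((y :: t).getD i 0) ((y :: t).getD (i + 1) 0)} := by
        ext i
        cases i with
        | zero =>
          simp only [Set.mem_setOf_eq, Set.mem_union, Set.mem_image]
          constructor
          · rintro ⟨h1, h2⟩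
            left
            simp only [List.getD_cons_zero, List.getD_cons_succ] at h2
            simp [h2]
          · rintro (h | ⟨j, _, hj⟩)
            · by_cases hR : R x y
              · simp only [hR, if_true, Set.mem_singleton_iff] at h
                refine ⟨by simp, ?_⟩
                simpa using hR
              · simp [hR] at h
            · omega
        | succ j =>
          simp only [Set.mem_setOf_eq, Set.mem_union, Set.mem_image]
          constructor
          · rintro ⟨h1, h2⟩
            right
            exact ⟨j, ⟨by simpa using h1, by simpa using h2⟩, rfl⟩
          · rintro (h | ⟨j', ⟨h1, h2⟩, hj⟩)
            · split at h <;> simp_all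
            · obtain rfl : j' = j := by omega
              exact ⟨by simpa using h1, by simpa using h2⟩
      rw [statCount, statCount, hset]
      have hfin : {i : ℕ | i + 1 < (y :: t).length ∧
          R ((y :: t).getD i 0) ((y :: t).getD (i + 1) 0)}.Finite :=
        Set.Finite.subset (Set.finite_Iio (y :: t).length) (fun i hi => by
          simp only [Set.mem_Iio]; exact lt_trans (Nat.lt_succ_self i) hi.1)
      rw [Set.ncard_union_eq ?dis ?f1 ?f2]
      case dis =>
        split
        · rintro s hs1 hs2 i hi
          have h0 : i = 0 := hs1 hi
          have := hs2 hi
          simp only [Set.mem_image] at this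
          obtain ⟨j, _, hj⟩ := this
          omega
        · simp
      case f1 => split <;> simp
      case f2 => exact Set.Finite.image _ hfin
      rw [Set.ncard_image_of_injective _ (fun i j h => by omega)]
      split <;> simp [add_comm]

inductive TT | nil | node (t1 t2 t3 : TT)
deriving DecidableEq

namespace TT

def size : TT → ℕ
  | nil => 0
  | node a b c => a.size + b.size + c.size + 1

def toWord : TT → ℕ → List ℕ
  | nil, _ => []
  | node a b c, base =>
      (base + c.size + 1) :: (a.toWord (base + c.size + 1 + b.size) ++
        (base + c.size + 1) :: (b.toWord (base + c.size + 1) ++ c.toWord base))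

def c1 : TT → ℕ
  | nil => 0
  | node a b c => c1 a + c1 b + c1 c + (if a = nil then 0 else 1)
def c2 : TT → ℕ
  | nil => 0
  | node a b c => c2 a + c2 b + c2 c + (if b = nil then 0 else 1)
def c3 : TT → ℕ
  | nil => 0
  | node a b c => c3 a + c3 b + c3 c + (if c = nil then 0 else 1)

lemma csum (t : TT) : c1 t + c2 t + c3 t + (if t = nil then 0 else 1) = size t := by
  induction t with
  | nil => simp [c1, c2, c3, size]
  | node a b c iha ihb ihc =>
    simp only [c1, c2, c3, size, reduceCtorEq, if_false]
    omega

lemma size_eq_zero {t : TT} : t.size = 0 ↔ t = nil := by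
  cases t <;> simp [size]

lemma toWord_eq_nil {t : TT} {b : ℕ} : t.toWord b = [] ↔ t = nil := by
  cases t <;> simp [toWord]

lemma length_toWord (t : TT) (b : ℕ) : (t.toWord b).length = 2 * t.size := by
  induction t generalizing b with
  | nil => simp [toWord, size]
  | node a b' c iha ihb ihc =>
    simp only [toWord, size, List.length_cons, List.length_append, iha, ihb, ihc]
    omega

lemma mem_toWord {t : TT} {b x : ℕ} (h : x ∈ t.toWord b) : b < x ∧ x ≤ b + t.size := by
  induction t generalizing b with
  | nil => simp [toWord] at h
  | node a b' c iha ihb ihc =>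
    simp only [toWord, List.mem_cons, List.mem_append] at h
    simp only [size]
    rcases h with rfl | h | rfl | h | h
    · omega
    · have := iha h; omega
    · omega
    · have := ihb h; omega
    · have := ihc h; omega

end TT

def AvoidP (σ : List ℕ) : Prop :=
  ¬ ∃ i j l : ℕ, i < j ∧ j < l ∧ l < σ.length ∧
      σ.getD j 0 < σ.getD i 0 ∧ σ.getD i 0 < σ.getD l 0

def Btwn (σ : List ℕ) : Prop :=
  ∀ j k l : ℕ, j < k → k < l → l < σ.length →
    σ.getD j 0 = σ.getD l 0 → σ.getD j 0 < σ.getD k 0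

lemma contains_213_iff (σ : List ℕ) :
    Contains σ [2, 1, 3] ↔ ∃ i j l : ℕ, i < j ∧ j < l ∧ l < σ.length ∧
      σ.getD j 0 < σ.getD i 0 ∧ σ.getD i 0 < σ.getD l 0 := by
  constructor
  · rintro ⟨ι, hmono, hiff⟩
    refine ⟨(ι ⟨0, by norm_num⟩).1, (ι ⟨1, by norm_num⟩).1, (ι ⟨2, by norm_num⟩).1,
      hmono (by decide : (⟨0, by norm_num⟩ : Fin 3) < ⟨1, by norm_num⟩),
      hmono (by decide : (⟨1, by norm_num⟩ : Fin 3) < ⟨2, by norm_num⟩),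
      (ι ⟨2, by norm_num⟩).2, ?_, ?_⟩
    · have := (hiff ⟨1, by norm_num⟩ ⟨0, by norm_num⟩).mp (by decide)
      rwa [List.getD_eq_getElem _ _ (ι _).2, List.getD_eq_getElem _ _ (ι _).2]
    · have := (hiff ⟨0, by norm_num⟩ ⟨2, by norm_num⟩).mp (by decide)
      rwa [List.getD_eq_getElem _ _ (ι _).2, List.getD_eq_getElem _ _ (ι _).2]
  · rintro ⟨i, j, l, hij, hjl, hl, h1, h2⟩
    have hi : i < σ.length := by omega
    have hj : j < σ.length := by omega
    rw [List.getD_eq_getElem _ _ hi, List.getD_eq_getElem _ _ hj] at h1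
    rw [List.getD_eq_getElem _ _ hi, List.getD_eq_getElem _ _ hl] at h2
    refine ⟨fun s => if s.1 = 0 then ⟨i, hi⟩ else if s.1 = 1 then ⟨j, hj⟩ else ⟨l, hl⟩,
      ?_, ?_⟩
    · intro s t hst
      fin_cases s <;> fin_cases t <;> simp_all [Fin.lt_def] <;> omega
    · intro s t
      fin_cases s <;> fin_cases t <;>
        simp_all [Fin.lt_def, List.get_eq_getElem] <;> omega
lemma avoids_213_iff (σ : List ℕ) : Avoids σ [2, 1, 3] ↔ AvoidP σ := by
  rw [Avoids, contains_213_iff]; rfl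

lemma btwn_append_left {u v : List ℕ} (h : Btwn (u ++ v)) : Btwn u := by
  intro j k l hjk hkl hl heq
  have hju : j < u.length := by omega
  have hku : k < u.length := by omega
  have e1 := List.getD_append u v 0 j (by omega)
  have e2 := List.getD_append u v 0 k (by omega)
  have e3 := List.getD_append u v 0 l hl
  have := h j k l hjk hkl (by simp; omega) (by rw [e1, e3]; exact heq)
  rwa [e1, e2] at this

lemma btwn_append_right {u v : List ℕ} (h : Btwn (u ++ v)) : Btwn v := by
  intro j k l hjk hkl hl heq
  have e : ∀ i, i < v.length → (u ++ v).getD (u.length + i) 0 = v.getD i 0 := by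
    intro i hi
    rw [List.getD_append_right u v 0 _ (by omega)]
    congr 1
    omega
  have := h (u.length + j) (u.length + k) (u.length + l) (by omega) (by omega)
    (by simp; omega) (by rw [e j (by omega), e l hl]; exact heq)
  rwa [e j (by omega), e k (by omega)] at this

lemma btwn_cons {x : ℕ} {l : List ℕ} (h : Btwn (x :: l)) : Btwn l :=
  btwn_append_right (u := [x]) h

lemma avoidP_append_left {u v : List ℕ} (h : AvoidP (u ++ v)) : AvoidP u := by
  rintro ⟨i, j, l, hij, hjl, hl, h1, h2⟩
  exact h ⟨i, j, l, hij, hjl, by simp; omega,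
    by rwa [List.getD_append u v 0 i (by omega), List.getD_append u v 0 j (by omega)],
    by rwa [List.getD_append u v 0 i (by omega), List.getD_append u v 0 l (by omega)]⟩

lemma avoidP_append_right {u v : List ℕ} (h : AvoidP (u ++ v)) : AvoidP v := by
  rintro ⟨i, j, l, hij, hjl, hl, h1, h2⟩
  have e : ∀ m, m < v.length → (u ++ v).getD (u.length + m) 0 = v.getD m 0 := by
    intro m hm
    rw [List.getD_append_right u v 0 _ (by omega)]
    congr 1
    omega
  exact h ⟨u.length + i, u.length + j, u.length + l, by omega, by omega, by simp; omega,
    by rwa [e i (by omega), e j (by omega)],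
    by rwa [e i (by omega), e l hl]⟩

lemma avoidP_cons {x : ℕ} {l : List ℕ} (h : AvoidP (x :: l)) : AvoidP l :=
  avoidP_append_right (u := [x]) h


section Glue
variable (k : ℕ) (A B C : List ℕ)

local notation "W" => k :: (A ++ k :: (B ++ C))

lemma glue_length : (W).length = A.length + B.length + C.length + 2 := by simp; omega

lemma gd_zero : (W).getD 0 0 = k := rfl

lemma gd_A {i : ℕ} (h : i < A.length) : (W).getD (i + 1) 0 = A.getD i 0 := by
  rw [List.getD_cons_succ, List.getD_append _ _ _ _ h]

lemma gd_k : (W).getD (A.length + 1) 0 = k := by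
  rw [List.getD_cons_succ, List.getD_append_right _ _ _ _ (le_refl _), Nat.sub_self,
    List.getD_cons_zero]

lemma gd_B {i : ℕ} (h : i < B.length) : (W).getD (A.length + 2 + i) 0 = B.getD i 0 := by
  rw [show A.length + 2 + i = (A.length + 1 + i) + 1 by omega, List.getD_cons_succ,
    List.getD_append_right _ _ _ _ (by omega),
    show A.length + 1 + i - A.length = i + 1 by omega, List.getD_cons_succ,
    List.getD_append _ _ _ _ h]

lemma gd_C {i : ℕ} (h : i < C.length) :
    (W).getD (A.length + 2 + B.length + i) 0 = C.getD i 0 := by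
  rw [show A.length + 2 + B.length + i = (A.length + 1 + B.length + i) + 1 by omega,
    List.getD_cons_succ, List.getD_append_right _ _ _ _ (by omega),
    show A.length + 1 + B.length + i - A.length = (B.length + i) + 1 by omega,
    List.getD_cons_succ, List.getD_append_right _ _ _ _ (by omega),
    show B.length + i - B.length = i by omega]

lemma region_cases {p : ℕ} (h : p < (W).length) :
    p = 0 ∨ (∃ i, i < A.length ∧ p = i + 1) ∨ p = A.length + 1 ∨
    (∃ i, i < B.length ∧ p = A.length + 2 + i) ∨
    (∃ i, i < C.length ∧ p = A.length + 2 + B.length + i) := by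
  rw [glue_length] at h
  by_cases h0 : p = 0
  · exact Or.inl h0
  by_cases hA : p ≤ A.length
  · exact Or.inr (Or.inl ⟨p - 1, by omega, by omega⟩)
  by_cases hk : p = A.length + 1
  · exact Or.inr (Or.inr (Or.inl hk))
  by_cases hB : p < A.length + 2 + B.length
  · exact Or.inr (Or.inr (Or.inr (Or.inl ⟨p - (A.length + 2), by omega, by omega⟩)))
  · exact Or.inr (Or.inr (Or.inr (Or.inr ⟨p - (A.length + 2 + B.length), by omega, by omega⟩)))

variable {k A B C}
variable (hA : ∀ x ∈ A, k < x) (hB : ∀ x ∈ B, k < x) (hC : ∀ x ∈ C, x < k)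
  (hBA : ∀ x ∈ A, ∀ y ∈ B, y < x)

include hA hB hC hBA in
lemma btwn_glue (bA : Btwn A) (bB : Btwn B) (bC : Btwn C) : Btwn (W) := by
  intro j m l hjm hml hl heq
  have memA : ∀ {i : ℕ}, i < A.length → A.getD i 0 ∈ A := by
    intro i hi; rw [List.getD_eq_getElem _ _ hi]; exact List.getElem_mem hi
  have memB : ∀ {i : ℕ}, i < B.length → B.getD i 0 ∈ B := by
    intro i hi; rw [List.getD_eq_getElem _ _ hi]; exact List.getElem_mem hi
  have memC : ∀ {i : ℕ}, i < C.length → C.getD i 0 ∈ C := by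
    intro i hi; rw [List.getD_eq_getElem _ _ hi]; exact List.getElem_mem hi
  have hlen := glue_length k A B C
  rcases region_cases k A B C hl with rfl | ⟨li, hli, rfl⟩ | hlk | ⟨li, hli, rfl⟩ | ⟨li, hli, rfl⟩
  · omega
  · -- l in A, so j in A or j = 0
    rcases region_cases k A B C (show j < (W).length by omega) with rfl | ⟨ji, hji, rfl⟩ | hjk | ⟨ji, hji, rfl⟩ | ⟨ji, hji, rfl⟩
    · -- j = 0 : value k = A[li] > k, contradiction
      rw [gd_zero, gd_A k A B C hli] at heq
      exact absurd (heq ▸ hA _ (memA hli)) (lt_irrefl k)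
    · -- j, l in A; m in A
      have hmA : ∃ mi, mi < A.length ∧ m = mi + 1 := ⟨m - 1, by omega, by omega⟩
      obtain ⟨mi, hmi, rfl⟩ := hmA
      rw [gd_A k A B C hji, gd_A k A B C hli] at heq
      rw [gd_A k A B C hji, gd_A k A B C hmi]
      exact bA ji mi li (by omega) (by omega) hli heq
    · omega
    · omega
    · omega
  · -- l = A.length + 1 : w_l = k ; j = 0 or j in A; both give contradiction except j=0
    subst hlk
    rcases region_cases k A B C (show j < (W).length by omega) with rfl | ⟨ji, hji, rfl⟩ | hjk | ⟨ji, hji, rfl⟩ | ⟨ji, hji, rfl⟩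
    · -- j = 0, l second k: m in A
      have hmA : ∃ mi, mi < A.length ∧ m = mi + 1 := ⟨m - 1, by omega, by omega⟩
      obtain ⟨mi, hmi, rfl⟩ := hmA
      rw [gd_zero, gd_A k A B C hmi]
      exact hA _ (memA hmi)
    · rw [gd_A k A B C hji, gd_k] at heq
      exact absurd (heq ▸ hA _ (memA hji)) (lt_irrefl k)
    · omega
    · omega
    · omega
  · -- l in B
    rcases region_cases k A B C (show j < (W).length by omega) with rfl | ⟨ji, hji, rfl⟩ | hjk | ⟨ji, hji, rfl⟩ | ⟨ji, hji, rfl⟩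
    · rw [gd_zero, gd_B k A B C hli] at heq
      exact absurd (heq ▸ hB _ (memB hli)) (lt_irrefl k)
    · rw [gd_A k A B C hji, gd_B k A B C hli] at heq
      have := hBA _ (memA hji) _ (memB hli)
      omega
    · subst hjk
      rw [gd_k, gd_B k A B C hli] at heq
      exact absurd (heq ▸ hB _ (memB hli)) (lt_irrefl k)
    · -- j, l in B; m in B
      have hmB : ∃ mi, mi < B.length ∧ m = A.length + 2 + mi := ⟨m - (A.length + 2), by omega, by omega⟩
      obtain ⟨mi, hmi, rfl⟩ := hmB
      rw [gd_B k A B C hji, gd_B k A B C hli] at heq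
      rw [gd_B k A B C hji, gd_B k A B C hmi]
      exact bB ji mi li (by omega) (by omega) hli heq
    · omega
  · -- l in C
    rcases region_cases k A B C (show j < (W).length by omega) with rfl | ⟨ji, hji, rfl⟩ | hjk | ⟨ji, hji, rfl⟩ | ⟨ji, hji, rfl⟩
    · rw [gd_zero, gd_C k A B C hli] at heq
      have := hC _ (memC hli)
      omega
    · rw [gd_A k A B C hji, gd_C k A B C hli] at heq
      have h1 := hA _ (memA hji)
      have h2 := hC _ (memC hli)
      omega
    · subst hjk
      rw [gd_k, gd_C k A B C hli] at heq
      have := hC _ (memC hli)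
      omega
    · rw [gd_B k A B C hji, gd_C k A B C hli] at heq
      have h1 := hB _ (memB hji)
      have h2 := hC _ (memC hli)
      omega
    · -- j, l in C; m in C
      have hmC : ∃ mi, mi < C.length ∧ m = A.length + 2 + B.length + mi :=
        ⟨m - (A.length + 2 + B.length), by omega, by omega⟩
      obtain ⟨mi, hmi, rfl⟩ := hmC
      rw [gd_C k A B C hji, gd_C k A B C hli] at heq
      rw [gd_C k A B C hji, gd_C k A B C hmi]
      exact bC ji mi li (by omega) (by omega) hli heq

include hA hB hC hBA in
lemma avoid_glue (aA : AvoidP A) (aB : AvoidP B) (aC : AvoidP C) : AvoidP (W) := by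
  rintro ⟨i, j, l, hij, hjl, hl, h1, h2⟩
  have memA : ∀ {i : ℕ}, i < A.length → A.getD i 0 ∈ A := by
    intro i hi; rw [List.getD_eq_getElem _ _ hi]; exact List.getElem_mem hi
  have memB : ∀ {i : ℕ}, i < B.length → B.getD i 0 ∈ B := by
    intro i hi; rw [List.getD_eq_getElem _ _ hi]; exact List.getElem_mem hi
  have memC : ∀ {i : ℕ}, i < C.length → C.getD i 0 ∈ C := by
    intro i hi; rw [List.getD_eq_getElem _ _ hi]; exact List.getElem_mem hi
  have hlen := glue_length k A B C
  rcases region_cases k A B C hl with rfl | ⟨li, hli, rfl⟩ | hlk | ⟨li, hli, rfl⟩ | ⟨li, hli, rfl⟩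
  · omega
  · -- l in A
    rw [gd_A k A B C hli] at h2
    rcases region_cases k A B C (show i < (W).length by omega) with rfl | ⟨ii, hii, rfl⟩ | hik | ⟨ii, hii, rfl⟩ | ⟨ii, hii, rfl⟩
    · -- i = 0: w_i = k, w_j < k with j in A-region
      rw [gd_zero] at h1
      have hjA : ∃ ji, ji < A.length ∧ j = ji + 1 := ⟨j - 1, by omega, by omega⟩
      obtain ⟨ji, hji, rfl⟩ := hjA
      rw [gd_A k A B C hji] at h1
      have := hA _ (memA hji)
      omega
    · -- i in A, j in A (between), l in A : pattern in A
      rw [gd_A k A B C hii] at h1 h2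
      have hjA : ∃ ji, ji < A.length ∧ j = ji + 1 := ⟨j - 1, by omega, by omega⟩
      obtain ⟨ji, hji, rfl⟩ := hjA
      rw [gd_A k A B C hji] at h1
      exact aA ⟨ii, ji, li, by omega, by omega, hli, h1, h2⟩
    · omega
    · omega
    · omega
  · -- l = second k
    subst hlk
    rw [gd_k] at h2
    rcases region_cases k A B C (show i < (W).length by omega) with rfl | ⟨ii, hii, rfl⟩ | hik | ⟨ii, hii, rfl⟩ | ⟨ii, hii, rfl⟩
    · rw [gd_zero] at h2; omega
    · rw [gd_A k A B C hii] at h2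
      have := hA _ (memA hii)
      omega
    · omega
    · omega
    · omega
  · -- l in B
    rw [gd_B k A B C hli] at h2
    have hlB := hB _ (memB hli)
    rcases region_cases k A B C (show i < (W).length by omega) with rfl | ⟨ii, hii, rfl⟩ | hik | ⟨ii, hii, rfl⟩ | ⟨ii, hii, rfl⟩
    · -- i = 0 : w_j < k, j before position of l in B-region: j in A, =k, or B: all ≥ k
      rw [gd_zero] at h1
      rcases region_cases k A B C (show j < (W).length by omega) with rfl | ⟨ji, hji, rfl⟩ | hjk | ⟨ji, hji, rfl⟩ | ⟨ji, hji, rfl⟩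
      · omega
      · rw [gd_A k A B C hji] at h1; have := hA _ (memA hji); omega
      · subst hjk; rw [gd_k] at h1; omega
      · rw [gd_B k A B C hji] at h1; have := hB _ (memB hji); omega
      · omega
    · -- i in A : w_i > w_l since A-values > B-values
      rw [gd_A k A B C hii] at h2
      have := hBA _ (memA hii) _ (memB hli)
      omega
    · -- i = second k : w_i = k, w_j < k, j in B-region
      subst hik
      rw [gd_k] at h1
      have hjB : ∃ ji, ji < B.length ∧ j = A.length + 2 + ji := ⟨j - (A.length + 2), by omega, by omega⟩
      obtain ⟨ji, hji, rfl⟩ := hjB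
      rw [gd_B k A B C hji] at h1
      have := hB _ (memB hji)
      omega
    · -- i in B, j in B : pattern in B
      rw [gd_B k A B C hii] at h1 h2
      have hjB : ∃ ji, ji < B.length ∧ j = A.length + 2 + ji := ⟨j - (A.length + 2), by omega, by omega⟩
      obtain ⟨ji, hji, rfl⟩ := hjB
      rw [gd_B k A B C hji] at h1
      exact aB ⟨ii, ji, li, by omega, by omega, hli, h1, h2⟩
    · omega
  · -- l in C : w_l < k so w_i < k so i in C, j in C
    rw [gd_C k A B C hli] at h2
    have hlC := hC _ (memC hli)
    rcases region_cases k A B C (show i < (W).length by omega) with rfl | ⟨ii, hii, rfl⟩ | hik | ⟨ii, hii, rfl⟩ | ⟨ii, hii, rfl⟩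
    · rw [gd_zero] at h2; omega
    · rw [gd_A k A B C hii] at h2; have := hA _ (memA hii); omega
    · subst hik; rw [gd_k] at h2; omega
    · rw [gd_B k A B C hii] at h2; have := hB _ (memB hii); omega
    · rw [gd_C k A B C hii] at h1 h2
      have hjC : ∃ ji, ji < C.length ∧ j = A.length + 2 + B.length + ji :=
        ⟨j - (A.length + 2 + B.length), by omega, by omega⟩
      obtain ⟨ji, hji, rfl⟩ := hjC
      rw [gd_C k A B C hji] at h1
      exact aC ⟨ii, ji, li, by omega, by omega, hli, h1, h2⟩

end Glue
section Part4
open TT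

lemma count_toWord (t : TT) (b : ℕ) (i : ℕ) :
    (t.toWord b).count i = if b < i ∧ i ≤ b + t.size then 2 else 0 := by
  induction t generalizing b with
  | nil => rw [size]; simp only [toWord, size, List.count_nil]; split_ifs <;> omega
  | node a b' c iha ihb ihc =>
    rw [size]
    simp only [toWord, size, List.count_cons, List.count_append, iha, ihb, ihc]
    split_ifs <;> simp_all <;> omega

lemma btwn_toWord (t : TT) (b : ℕ) : Btwn (t.toWord b) := by
  induction t generalizing b with
  | nil => intro j k l _ _ hl; simp [toWord] at hl
  | node a b' c iha ihb ihc =>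
    show Btwn ((b + c.size + 1) :: (a.toWord (b + c.size + 1 + b'.size) ++
      (b + c.size + 1) :: (b'.toWord (b + c.size + 1) ++ c.toWord b)))
    exact btwn_glue
      (fun x hx => by have := mem_toWord hx; omega)
      (fun x hx => by have := mem_toWord hx; omega)
      (fun x hx => by have := mem_toWord hx; omega)
      (fun x hx y hy => by have := mem_toWord hx; have := mem_toWord hy; omega)
      (iha _) (ihb _) (ihc _)

lemma avoidP_toWord (t : TT) (b : ℕ) : AvoidP (t.toWord b) := by
  induction t generalizing b with
  | nil => rintro ⟨i, j, l, _, _, hl, _⟩; simp [toWord] at hl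
  | node a b' c iha ihb ihc =>
    show AvoidP ((b + c.size + 1) :: (a.toWord (b + c.size + 1 + b'.size) ++
      (b + c.size + 1) :: (b'.toWord (b + c.size + 1) ++ c.toWord b)))
    exact avoid_glue
      (fun x hx => by have := mem_toWord hx; omega)
      (fun x hx => by have := mem_toWord hx; omega)
      (fun x hx => by have := mem_toWord hx; omega)
      (fun x hx y hy => by have := mem_toWord hx; have := mem_toWord hy; omega)
      (iha _) (ihb _) (ihc _)

lemma adjP_cons (R : ℕ → ℕ → Prop) (x : ℕ) {l : List ℕ} (h : l ≠ []) :
    adjP R (x :: l) = (if R x (l.head h) then 1 else 0) + adjP R l := by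
  cases l with
  | nil => simp at h
  | cons y t => rfl

lemma adjP_append' (R : ℕ → ℕ → Prop) {u v : List ℕ} (hu : u ≠ []) (hv : v ≠ []) :
    adjP R (u ++ v) = adjP R u + adjP R v +
      (if R (u.getLast hu) (v.head hv) then 1 else 0) := by
  induction u with
  | nil => exact absurd rfl hu
  | cons x u' ih =>
    cases u' with
    | nil =>
      simp only [List.singleton_append, adjP_single, List.getLast_singleton]
      rw [adjP_cons R x hv]
      split_ifs <;> simp_all <;> omega
    | cons x' u'' =>
      have hne : x' :: u'' ≠ [] := by simp
      have ih' := ih hne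
      rw [List.cons_append] at ih'
      rw [List.cons_append, List.cons_append, adjP_cons_cons, ih', adjP_cons_cons,
        List.getLast_cons hne]
      omega

lemma adjP_glue (R : ℕ → ℕ → Prop) (k : ℕ) (A B C : List ℕ) :
    adjP R (k :: (A ++ k :: (B ++ C))) =
      adjP R A + adjP R B + adjP R C
      + (if hA : A ≠ [] then
          (if R k (A.head hA) then 1 else 0) + (if R (A.getLast hA) k then 1 else 0)
        else (if R k k then 1 else 0))
      + (if hB : B ≠ [] then
          (if R k (B.head hB) then 1 else 0) +
          (if hC : C ≠ [] then (if R (B.getLast hB) (C.head hC) then 1 else 0) else 0)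
        else (if hC : C ≠ [] then (if R k (C.head hC) then 1 else 0) else 0)) := by
  have core : adjP R (k :: (B ++ C)) = adjP R B + adjP R C +
      (if hB : B ≠ [] then
          (if R k (B.head hB) then 1 else 0) +
          (if hC : C ≠ [] then (if R (B.getLast hB) (C.head hC) then 1 else 0) else 0)
        else (if hC : C ≠ [] then (if R k (C.head hC) then 1 else 0) else 0)) := by
    by_cases hB : B = []
    · subst hB
      by_cases hC : C = []
      · subst hC; simp [adjP_single, adjP_nil]
      · simp only [List.nil_append, adjP ,adjP_nil, ne_eq, not_true_eq_false,
          dite_false, dif_pos hC]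
        rw [adjP_cons R k hC]
        omega
    · by_cases hC : C = []
      · subst hC
        rw [List.append_nil, adjP_cons R k hB]
        simp only [adjP_nil, dif_pos hB, ne_eq, not_true_eq_false, dite_false]
        omega
      · have h1 : B ++ C ≠ [] := by simp [hB]
        rw [adjP_cons R k h1, adjP_append' R hB hC, List.head_append_of_ne_nil hB,
          dif_pos hB, dif_pos hC]
        omega
  by_cases hA : A = []
  · subst hA
    have h2 : k :: (B ++ C) ≠ [] := by simp
    rw [List.nil_append, adjP_cons R k h2, core,
      dif_neg (by simp : ¬(([] : List ℕ) ≠ []))]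
    simp only [List.head_cons, adjP_nil]
    split_ifs <;> simp_all <;> omega
  · have h3 : A ++ k :: (B ++ C) ≠ [] := by simp [hA]
    rw [adjP_cons R k h3, List.head_append_of_ne_nil hA,
      adjP_append' R hA (by simp : k :: (B ++ C) ≠ []), core]
    simp only [List.head_cons, dif_pos hA]
    split_ifs <;> simp_all <;> omega


lemma stats_glue {k : ℕ} {A B C : List ℕ}
    (hA : ∀ x ∈ A, k < x) (hB : ∀ x ∈ B, k < x) (hC : ∀ x ∈ C, x < k) :
    adjP (· = ·) (k :: (A ++ k :: (B ++ C))) =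
      adjP (· = ·) A + adjP (· = ·) B + adjP (· = ·) C + (if A = [] then 1 else 0) ∧
    adjP (· > ·) (k :: (A ++ k :: (B ++ C))) =
      adjP (· > ·) A + adjP (· > ·) B + adjP (· > ·) C +
        (if A = [] then 0 else 1) + (if C = [] then 0 else 1) ∧
    adjP (· < ·) (k :: (A ++ k :: (B ++ C))) =
      adjP (· < ·) A + adjP (· < ·) B + adjP (· < ·) C +
        (if A = [] then 0 else 1) + (if B = [] then 0 else 1) := by
  have mA1 : ∀ (h : A ≠ []), k < A.head h := fun h => hA _ (List.head_mem h)
  have mA2 : ∀ (h : A ≠ []), k < A.getLast h := fun h => hA _ (List.getLast_mem h)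
  have mB1 : ∀ (h : B ≠ []), k < B.head h := fun h => hB _ (List.head_mem h)
  have mB2 : ∀ (h : B ≠ []), k < B.getLast h := fun h => hB _ (List.getLast_mem h)
  have mC1 : ∀ (h : C ≠ []), C.head h < k := fun h => hC _ (List.head_mem h)
  refine ⟨?_, ?_, ?_⟩ <;> rw [adjP_glue]
  · by_cases hA' : A = [] <;> by_cases hB' : B = [] <;> by_cases hC' : C = []
    · rw [dif_neg (show ¬A ≠ [] by simp [hA']),
        if_pos rfl,
        dif_neg (show ¬B ≠ [] by simp [hB']),
        dif_neg (show ¬C ≠ [] by simp [hC']),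
        if_pos hA']
    · rw [dif_neg (show ¬A ≠ [] by simp [hA']),
        if_pos rfl,
        dif_neg (show ¬B ≠ [] by simp [hB']),
        dif_pos hC',
        if_neg (show ¬(k = C.head hC') by have := mC1 hC'; omega),
        if_pos hA']
    · rw [dif_neg (show ¬A ≠ [] by simp [hA']),
        if_pos rfl,
        dif_pos hB',
        if_neg (show ¬(k = B.head hB') by have := mB1 hB'; omega),
        dif_neg (show ¬C ≠ [] by simp [hC']),
        if_pos hA']
    · rw [dif_neg (show ¬A ≠ [] by simp [hA']),
        if_pos rfl,
        dif_pos hB',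
        if_neg (show ¬(k = B.head hB') by have := mB1 hB'; omega),
        dif_pos hC',
        if_neg (show ¬(B.getLast hB' = C.head hC') by have := mB2 hB'; have := mC1 hC'; omega),
        if_pos hA']
    · rw [dif_pos hA',
        if_neg (show ¬(k = A.head hA') by have := mA1 hA'; omega),
        if_neg (show ¬(A.getLast hA' = k) by have := mA2 hA'; omega),
        dif_neg (show ¬B ≠ [] by simp [hB']),
        dif_neg (show ¬C ≠ [] by simp [hC']),
        if_neg hA']
    · rw [dif_pos hA',
        if_neg (show ¬(k = A.head hA') by have := mA1 hA'; omega),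
        if_neg (show ¬(A.getLast hA' = k) by have := mA2 hA'; omega),
        dif_neg (show ¬B ≠ [] by simp [hB']),
        dif_pos hC',
        if_neg (show ¬(k = C.head hC') by have := mC1 hC'; omega),
        if_neg hA']
    · rw [dif_pos hA',
        if_neg (show ¬(k = A.head hA') by have := mA1 hA'; omega),
        if_neg (show ¬(A.getLast hA' = k) by have := mA2 hA'; omega),
        dif_pos hB',
        if_neg (show ¬(k = B.head hB') by have := mB1 hB'; omega),
        dif_neg (show ¬C ≠ [] by simp [hC']),
        if_neg hA']
    · rw [dif_pos hA',
        if_neg (show ¬(k = A.head hA') by have := mA1 hA'; omega),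
        if_neg (show ¬(A.getLast hA' = k) by have := mA2 hA'; omega),
        dif_pos hB',
        if_neg (show ¬(k = B.head hB') by have := mB1 hB'; omega),
        dif_pos hC',
        if_neg (show ¬(B.getLast hB' = C.head hC') by have := mB2 hB'; have := mC1 hC'; omega),
        if_neg hA']
  · by_cases hA' : A = [] <;> by_cases hB' : B = [] <;> by_cases hC' : C = []
    · rw [dif_neg (show ¬A ≠ [] by simp [hA']),
        if_neg (lt_irrefl k),
        dif_neg (show ¬B ≠ [] by simp [hB']),
        dif_neg (show ¬C ≠ [] by simp [hC']),
        if_pos hA',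
        if_pos hC']
    · rw [dif_neg (show ¬A ≠ [] by simp [hA']),
        if_neg (lt_irrefl k),
        dif_neg (show ¬B ≠ [] by simp [hB']),
        dif_pos hC',
        if_pos (show k > C.head hC' from mC1 hC'),
        if_pos hA',
        if_neg hC']
    · rw [dif_neg (show ¬A ≠ [] by simp [hA']),
        if_neg (lt_irrefl k),
        dif_pos hB',
        if_neg (show ¬(k > B.head hB') by have := mB1 hB'; omega),
        dif_neg (show ¬C ≠ [] by simp [hC']),
        if_pos hA',
        if_pos hC']
    · rw [dif_neg (show ¬A ≠ [] by simp [hA']),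
        if_neg (lt_irrefl k),
        dif_pos hB',
        if_neg (show ¬(k > B.head hB') by have := mB1 hB'; omega),
        dif_pos hC',
        if_pos (show B.getLast hB' > C.head hC' by have := mB2 hB'; have := mC1 hC'; omega),
        if_pos hA',
        if_neg hC']
    · rw [dif_pos hA',
        if_neg (show ¬(k > A.head hA') by have := mA1 hA'; omega),
        if_pos (show A.getLast hA' > k from mA2 hA'),
        dif_neg (show ¬B ≠ [] by simp [hB']),
        dif_neg (show ¬C ≠ [] by simp [hC']),
        if_neg hA',
        if_pos hC']
    · rw [dif_pos hA',
        if_neg (show ¬(k > A.head hA') by have := mA1 hA'; omega),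
        if_pos (show A.getLast hA' > k from mA2 hA'),
        dif_neg (show ¬B ≠ [] by simp [hB']),
        dif_pos hC',
        if_pos (show k > C.head hC' from mC1 hC'),
        if_neg hA',
        if_neg hC']
    · rw [dif_pos hA',
        if_neg (show ¬(k > A.head hA') by have := mA1 hA'; omega),
        if_pos (show A.getLast hA' > k from mA2 hA'),
        dif_pos hB',
        if_neg (show ¬(k > B.head hB') by have := mB1 hB'; omega),
        dif_neg (show ¬C ≠ [] by simp [hC']),
        if_neg hA',
        if_pos hC']
    · rw [dif_pos hA',
        if_neg (show ¬(k > A.head hA') by have := mA1 hA'; omega),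
        if_pos (show A.getLast hA' > k from mA2 hA'),
        dif_pos hB',
        if_neg (show ¬(k > B.head hB') by have := mB1 hB'; omega),
        dif_pos hC',
        if_pos (show B.getLast hB' > C.head hC' by have := mB2 hB'; have := mC1 hC'; omega),
        if_neg hA',
        if_neg hC']
  · by_cases hA' : A = [] <;> by_cases hB' : B = [] <;> by_cases hC' : C = []
    · rw [dif_neg (show ¬A ≠ [] by simp [hA']),
        if_neg (lt_irrefl k),
        dif_neg (show ¬B ≠ [] by simp [hB']),
        dif_neg (show ¬C ≠ [] by simp [hC']),
        if_pos hA',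
        if_pos hB']
    · rw [dif_neg (show ¬A ≠ [] by simp [hA']),
        if_neg (lt_irrefl k),
        dif_neg (show ¬B ≠ [] by simp [hB']),
        dif_pos hC',
        if_neg (show ¬(k < C.head hC') by have := mC1 hC'; omega),
        if_pos hA',
        if_pos hB']
    · rw [dif_neg (show ¬A ≠ [] by simp [hA']),
        if_neg (lt_irrefl k),
        dif_pos hB',
        if_pos (mB1 hB'),
        dif_neg (show ¬C ≠ [] by simp [hC']),
        if_pos hA',
        if_neg hB']
    · rw [dif_neg (show ¬A ≠ [] by simp [hA']),
        if_neg (lt_irrefl k),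
        dif_pos hB',
        if_pos (mB1 hB'),
        dif_pos hC',
        if_neg (show ¬(B.getLast hB' < C.head hC') by have := mB2 hB'; have := mC1 hC'; omega),
        if_pos hA',
        if_neg hB']
    · rw [dif_pos hA',
        if_pos (mA1 hA'),
        if_neg (show ¬(A.getLast hA' < k) by have := mA2 hA'; omega),
        dif_neg (show ¬B ≠ [] by simp [hB']),
        dif_neg (show ¬C ≠ [] by simp [hC']),
        if_neg hA',
        if_pos hB']
    · rw [dif_pos hA',
        if_pos (mA1 hA'),
        if_neg (show ¬(A.getLast hA' < k) by have := mA2 hA'; omega),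
        dif_neg (show ¬B ≠ [] by simp [hB']),
        dif_pos hC',
        if_neg (show ¬(k < C.head hC') by have := mC1 hC'; omega),
        if_neg hA',
        if_pos hB']
    · rw [dif_pos hA',
        if_pos (mA1 hA'),
        if_neg (show ¬(A.getLast hA' < k) by have := mA2 hA'; omega),
        dif_pos hB',
        if_pos (mB1 hB'),
        dif_neg (show ¬C ≠ [] by simp [hC']),
        if_neg hA',
        if_neg hB']
    · rw [dif_pos hA',
        if_pos (mA1 hA'),
        if_neg (show ¬(A.getLast hA' < k) by have := mA2 hA'; omega),
        dif_pos hB',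
        if_pos (mB1 hB'),
        dif_pos hC',
        if_neg (show ¬(B.getLast hB' < C.head hC') by have := mB2 hB'; have := mC1 hC'; omega),
        if_neg hA',
        if_neg hB']

lemma stats_toWord (t : TT) (β : ℕ) :
    adjP (· = ·) (t.toWord β) + t.c1 = t.size ∧
    adjP (· > ·) (t.toWord β) = t.c1 + t.c3 ∧
    adjP (· < ·) (t.toWord β) = t.c1 + t.c2 := by
  induction t generalizing β with
  | nil => simp [TT.toWord, adjP_nil, TT.c1, TT.c2, TT.c3, TT.size]
  | node a b' c iha ihb ihc =>
    obtain ⟨ha1, ha2, ha3⟩ := iha (β + c.size + 1 + b'.size)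
    obtain ⟨hb1, hb2, hb3⟩ := ihb (β + c.size + 1)
    obtain ⟨hc1, hc2, hc3⟩ := ihc β
    have hshape : (TT.node a b' c).toWord β = (β + c.size + 1) ::
      (a.toWord (β + c.size + 1 + b'.size) ++ (β + c.size + 1) ::
        (b'.toWord (β + c.size + 1) ++ c.toWord β)) := rfl
    obtain ⟨g1, g2, g3⟩ := stats_glue (k := β + c.size + 1)
      (A := a.toWord (β + c.size + 1 + b'.size)) (B := b'.toWord (β + c.size + 1))
      (C := c.toWord β)
      (fun x hx => by have := TT.mem_toWord hx; omega)
      (fun x hx => by have := TT.mem_toWord hx; omega)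
      (fun x hx => by have := TT.mem_toWord hx; omega)
    refine ⟨?_, ?_, ?_⟩
    · rw [hshape, g1]
      simp only [TT.c1, TT.size, TT.toWord_eq_nil]
      split_ifs <;> omega
    · rw [hshape, g2]
      simp only [TT.c1, TT.c3, TT.size, TT.toWord_eq_nil]
      split_ifs <;> omega
    · rw [hshape, g3]
      simp only [TT.c1, TT.c2, TT.size, TT.toWord_eq_nil]
      split_ifs <;> omega

end Part4

section Part5
open TT

lemma exists_split_first {a : ℕ} {l : List ℕ} (h : a ∈ l) :
    ∃ u v, l = u ++ a :: v ∧ a ∉ u := by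
  induction l with
  | nil => simp at h
  | cons x t ih =>
    by_cases hx : x = a
    · exact ⟨[], t, by simp [hx], by simp⟩
    · have hat : a ∈ t := by
        rcases List.mem_cons.mp h with rfl | h2
        · exact absurd rfl hx
        · exact h2
      obtain ⟨u, v, huv, hnu⟩ := ih hat
      refine ⟨x :: u, v, by simp [huv], ?_⟩
      simp only [List.mem_cons, not_or]
      exact ⟨fun h => hx h.symm, hnu⟩

lemma split_big_small (L : List ℕ) (k : ℕ) (hne : ∀ x ∈ L, x ≠ k)
    (hprop : ∀ p q, p < q → q < L.length → ¬(L.getD p 0 < k ∧ k < L.getD q 0)) :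
    ∃ U V, L = U ++ V ∧ (∀ x ∈ U, k < x) ∧ (∀ x ∈ V, x < k) := by
  induction L with
  | nil => exact ⟨[], [], rfl, by simp, by simp⟩
  | cons x t ih =>
    by_cases hx : k < x
    · obtain ⟨U, V, hUV, hU, hV⟩ := ih (fun y hy => hne y (by simp [hy]))
        (fun p q h1 h2 => by
          have := hprop (p + 1) (q + 1) (by omega) (by simp; omega)
          simpa using this)
      refine ⟨x :: U, V, by simp [hUV], ?_, hV⟩
      intro y hy
      rcases List.mem_cons.mp hy with rfl | hy'
      · exact hx
      · exact hU y hy'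
    · have hxk : x < k := lt_of_le_of_ne (not_lt.mp hx) (hne x (by simp))
      refine ⟨[], x :: t, rfl, by simp, ?_⟩
      intro y hy0
      rcases List.mem_cons.mp hy0 with rfl | hy
      · exact hxk
      · obtain ⟨q, hq, rfl⟩ := List.mem_iff_getElem.mp hy
        have h2 := hprop 0 (q + 1) (by omega) (by simp; omega)
        simp only [List.getD_cons_zero, List.getD_cons_succ] at h2
        rw [List.getD_eq_getElem _ _ hq] at h2
        have h3 : ¬(k < t[q]) := fun hlt => h2 ⟨hxk, hlt⟩
        have h4 : t[q] ≠ k := hne _ (by simp [List.getElem_mem hq])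
        omega

theorem structure_thm (m : ℕ) : ∀ (σ : List ℕ) (b : ℕ),
    (∀ i, σ.count i = if b < i ∧ i ≤ b + m then 2 else 0) →
    Btwn σ → AvoidP σ → ∃ t : TT, t.size = m ∧ t.toWord b = σ := by
  induction m using Nat.strong_induction_on with
  | _ m IH =>
  intro σ b hcount hbtwn havoid
  rcases Nat.eq_zero_or_pos m with rfl | hm
  · refine ⟨TT.nil, rfl, ?_⟩
    cases σ with
    | nil => rfl
    | cons x s =>
      have := hcount x
      simp only [List.count_cons_self] at this
      split_ifs at this <;> omega
  · cases σ with
    | nil =>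
      have := hcount (b + 1)
      simp only [List.count_nil] at this
      split_ifs at this <;> omega
    | cons k rest =>
    have hkmem : k ∈ k :: rest := by simp
    have hkrange : b < k ∧ k ≤ b + m := by
      have h0 := hcount k
      by_contra hcon
      rw [if_neg hcon] at h0
      exact (List.count_eq_zero.mp h0) hkmem
    have hck : (k :: rest).count k = 2 := by rw [hcount k, if_pos hkrange]
    have hcrest : rest.count k = 1 := by
      have := List.count_cons_self (a := k) (l := rest)
      omega
    have hkrest : k ∈ rest := by
      by_contra hc
      rw [List.count_eq_zero.mpr hc] at hcrest
      omega
    obtain ⟨M, R, hrest, hkM⟩ := exists_split_first hkrest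
    have hkR : k ∉ R := by
      by_contra hc
      have h1 : rest.count k = M.count k + (k :: R).count k := by
        rw [hrest, List.count_append]
      rw [List.count_eq_zero.mpr hkM, List.count_cons_self] at h1
      have := List.count_pos_iff.mpr hc
      omega
    have hw : k :: rest = k :: (M ++ k :: (R ++ [])) := by simp [hrest]
    rw [hw] at hbtwn havoid
    have hlen := glue_length k M R ([] : List ℕ)
    have F1 : ∀ x ∈ M, k < x := by
      intro x hx
      obtain ⟨i, hi, rfl⟩ := List.mem_iff_getElem.mp hx
      have e1 := gd_A k M R ([] : List ℕ) hi
      have e2 := gd_k k M R ([] : List ℕ)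
      have h := hbtwn 0 (i + 1) (M.length + 1) (by omega) (by omega) (by omega)
        (by rw [gd_zero, e2])
      rwa [gd_zero, e1, List.getD_eq_getElem _ _ hi] at h
    have F2 : ∀ x ∈ M, x ∉ R := by
      intro x hxM hxR
      obtain ⟨i, hi, hix⟩ := List.mem_iff_getElem.mp hxM
      obtain ⟨j, hj, hjx⟩ := List.mem_iff_getElem.mp hxR
      have e1 := gd_A k M R ([] : List ℕ) hi
      have e2 := gd_k k M R ([] : List ℕ)
      have e3 := gd_B k M R ([] : List ℕ) hj
      have h := hbtwn (i + 1) (M.length + 1) (M.length + 2 + j) (by omega) (by omega)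
        (by omega)
        (by rw [e1, e3, List.getD_eq_getElem _ _ hi, List.getD_eq_getElem _ _ hj, hix, hjx])
      rw [e1, e2, List.getD_eq_getElem _ _ hi, hix] at h
      have := F1 x hxM
      omega
    have F4 : ∀ u ∈ M, ∀ w ∈ R, w < u := by
      intro u huM w hwR
      obtain ⟨i, hi, hiu⟩ := List.mem_iff_getElem.mp huM
      obtain ⟨j, hj, hjw⟩ := List.mem_iff_getElem.mp hwR
      have e1 := gd_A k M R ([] : List ℕ) hi
      have e2 := gd_k k M R ([] : List ℕ)
      have e3 := gd_B k M R ([] : List ℕ) hj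
      have hne : w ≠ u := fun h => F2 u huM (h ▸ hwR)
      by_contra hc
      exact havoid ⟨i + 1, M.length + 1, M.length + 2 + j, by omega, by omega, by omega,
        by rw [e1, e2, List.getD_eq_getElem _ _ hi, hiu]; exact F1 u huM,
        by rw [e1, e3, List.getD_eq_getElem _ _ hi, List.getD_eq_getElem _ _ hj, hiu, hjw]
           omega⟩
    obtain ⟨R1, R2, hRsplit, hR1, hR2⟩ := split_big_small R k
      (fun x hx h => hkR (h ▸ hx))
      (by
        intro p q hpq hq hbad
        have e1 := gd_B k M R ([] : List ℕ) (show p < R.length by omega)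
        have e2 := gd_B k M R ([] : List ℕ) hq
        exact havoid ⟨0, M.length + 2 + p, M.length + 2 + q, by omega, by omega, by omega,
          by rw [gd_zero, e1]; exact hbad.1, by rw [gd_zero, e2]; exact hbad.2⟩)
    have hcnt : ∀ i, M.count i + R1.count i + R2.count i + (if i = k then 2 else 0) =
        if b < i ∧ i ≤ b + m then 2 else 0 := by
      intro i
      have h := hcount i
      simp only [hrest, hRsplit, List.count_cons, List.count_append, beq_iff_eq] at h
      split_ifs at h <;> split_ifs <;> omega
    have memM_count : ∀ x ∈ M, M.count x = 2 := by
      intro x hx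
      have h1 : R1.count x = 0 := List.count_eq_zero.mpr
        (fun hc => F2 x hx (by rw [hRsplit]; exact List.mem_append_left _ hc))
      have h2 : R2.count x = 0 := List.count_eq_zero.mpr
        (fun hc => F2 x hx (by rw [hRsplit]; exact List.mem_append_right _ hc))
      have h3 : x ≠ k := by have := F1 x hx; omega
      have h4 := hcnt x
      have h5 : M.count x ≠ 0 := fun hc => (List.count_eq_zero.mp hc) hx
      rw [h1, h2, if_neg h3] at h4
      split_ifs at h4 <;> omega
    have memrange : ∀ x, (x ∈ M ∨ x ∈ R1 ∨ x ∈ R2) → b < x ∧ x ≤ b + m := by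
      intro x hx
      by_contra hc
      have h4 := hcnt x
      rw [if_neg hc] at h4
      have h5 : M.count x = 0 ∧ R1.count x = 0 ∧ R2.count x = 0 := by
        split_ifs at h4 <;> omega
      rcases hx with h | h | h
      · exact (List.count_eq_zero.mp h5.1) h
      · exact (List.count_eq_zero.mp h5.2.1) h
      · exact (List.count_eq_zero.mp h5.2.2) h
    have cR2 : ∀ i, R2.count i = if b < i ∧ i ≤ b + (k - 1 - b) then 2 else 0 := by
      intro i
      by_cases hik : i < k
      · have h1 : M.count i = 0 := List.count_eq_zero.mpr
          (fun hc => by have := F1 i hc; omega)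
        have h2 : R1.count i = 0 := List.count_eq_zero.mpr
          (fun hc => by have := hR1 i hc; omega)
        have h4 := hcnt i
        rw [h1, h2, if_neg (by omega : ¬ i = k)] at h4
        split_ifs at h4 ⊢ <;> omega
      · have h3 : R2.count i = 0 := List.count_eq_zero.mpr
          (fun hc => by have := hR2 i hc; omega)
        rw [h3, if_neg (by omega)]
    have hdisjMR1 : ∀ v ∈ M, v ∉ R1 := fun v hv hc =>
      F2 v hv (by rw [hRsplit]; exact List.mem_append_left _ hc)
    have hor : ∀ v, k < v → v ≤ b + m → v ∈ M ∨ v ∈ R1 := by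
      intro v h1 h2
      have h4 := hcnt v
      rw [if_pos (by omega : b < v ∧ v ≤ b + m), if_neg (by omega : ¬ v = k)] at h4
      by_contra hc
      push_neg at hc
      rw [List.count_eq_zero.mpr hc.1, List.count_eq_zero.mpr hc.2] at h4
      have h5 : R2.count v = 0 := List.count_eq_zero.mpr
        (fun hm' => by have := hR2 v hm'; omega)
      omega
    have key : ∃ K, k ≤ K ∧ K ≤ b + m ∧ (∀ v, v ∈ R1 ↔ (k < v ∧ v ≤ K)) ∧
        (∀ v, v ∈ M ↔ (K < v ∧ v ≤ b + m)) := by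
      have hdown : ∀ v ∈ R1, ∀ w, k < w → w < v → w ∈ R1 := by
        intro v hv w h1 h2
        have hw2 : w ≤ b + m := by
          have := memrange v (Or.inr (Or.inl hv)); omega
        rcases hor w h1 hw2 with h | h
        · exfalso
          have := F4 w h v (by rw [hRsplit]; exact List.mem_append_left _ hv)
          omega
        · exact h
      refine ⟨k + ((Finset.Ioc k (b + m)).filter (fun v => v ∈ R1)).card,
        by omega, ?_, ?_, ?_⟩
      · have h1 : ((Finset.Ioc k (b + m)).filter (fun v => v ∈ R1)).card ≤
            (Finset.Ioc k (b + m)).card := Finset.card_filter_le _ _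
        rw [Nat.card_Ioc] at h1
        omega
      · intro v
        constructor
        · intro hv
          refine ⟨hR1 v hv, ?_⟩
          have hvr := memrange v (Or.inr (Or.inl hv))
          have hsub : Finset.Ioc k v ⊆ (Finset.Ioc k (b + m)).filter (fun v => v ∈ R1) := by
            intro w hw
            simp only [Finset.mem_Ioc] at hw
            simp only [Finset.mem_filter, Finset.mem_Ioc]
            refine ⟨⟨hw.1, by omega⟩, ?_⟩
            rcases eq_or_lt_of_le hw.2 with rfl | hlt
            · exact hv
            · exact hdown v hv w hw.1 hlt
          have := Finset.card_le_card hsub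
          rw [Nat.card_Ioc] at this
          omega
        · rintro ⟨h1, h2⟩
          by_contra hc
          have hvM : v ∈ M := by
            rcases hor v h1 (by
              have h3 : ((Finset.Ioc k (b + m)).filter (fun v => v ∈ R1)).card ≤
                  (Finset.Ioc k (b + m)).card := Finset.card_filter_le _ _
              rw [Nat.card_Ioc] at h3
              omega) with h | h
            · exact h
            · exact absurd h hc
          have hsub : (Finset.Ioc k (b + m)).filter (fun v => v ∈ R1) ⊆
              Finset.Ioo k v := by
            intro w hw
            simp only [Finset.mem_filter, Finset.mem_Ioc] at hw
            have := F4 v hvM w (by rw [hRsplit]; exact List.mem_append_left _ hw.2)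
            exact Finset.mem_Ioo.mpr ⟨hw.1.1, this⟩
          have := Finset.card_le_card hsub
          rw [Nat.card_Ioo] at this
          omega
      · intro v
        constructor
        · intro hv
          have hvr := memrange v (Or.inl hv)
          refine ⟨?_, hvr.2⟩
          have hsub : (Finset.Ioc k (b + m)).filter (fun v => v ∈ R1) ⊆
              Finset.Ioo k v := by
            intro w hw
            simp only [Finset.mem_filter, Finset.mem_Ioc] at hw
            have := F4 v hv w (by rw [hRsplit]; exact List.mem_append_left _ hw.2)
            exact Finset.mem_Ioo.mpr ⟨hw.1.1, this⟩
          have := Finset.card_le_card hsub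
          rw [Nat.card_Ioo] at this
          have := F1 v hv
          omega
        · rintro ⟨h1, h2⟩
          rcases hor v (by omega) h2 with h | h
          · exact h
          · exfalso
            have hvr := memrange v (Or.inr (Or.inl h))
            have hsub : Finset.Ioc k v ⊆
                (Finset.Ioc k (b + m)).filter (fun v => v ∈ R1) := by
              intro w hw
              simp only [Finset.mem_Ioc] at hw
              simp only [Finset.mem_filter, Finset.mem_Ioc]
              refine ⟨⟨hw.1, by omega⟩, ?_⟩
              rcases eq_or_lt_of_le hw.2 with rfl | hlt
              · exact h
              · exact hdown v h w hw.1 hlt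
            have := Finset.card_le_card hsub
            rw [Nat.card_Ioc] at this
            omega
    obtain ⟨K, hKlb, hKub, memR1_iff, memM_iff⟩ := key
    have cM : ∀ i, M.count i = if K < i ∧ i ≤ K + (b + m - K) then 2 else 0 := by
      intro i
      by_cases hi : i ∈ M
      · rw [if_pos (by have := (memM_iff i).mp hi; omega), memM_count i hi]
      · rw [List.count_eq_zero.mpr hi,
          if_neg (fun hc => hi ((memM_iff i).mpr (by omega)))]
    have cR1 : ∀ i, R1.count i = if k < i ∧ i ≤ k + (K - k) then 2 else 0 := by
      intro i
      by_cases hi : i ∈ R1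
      · rw [if_pos (by have := (memR1_iff i).mp hi; omega)]
        have h1 : M.count i = 0 := List.count_eq_zero.mpr
          (fun hc => hdisjMR1 i hc hi)
        have h2 : R2.count i = 0 := List.count_eq_zero.mpr
          (fun hc => by have := hR2 i hc; have := hR1 i hi; omega)
        have h4 := hcnt i
        have hr := memrange i (Or.inr (Or.inl hi))
        rw [h1, h2, if_neg (by have := hR1 i hi; omega : ¬ i = k), if_pos (by omega)] at h4
        omega
      · rw [List.count_eq_zero.mpr hi,
          if_neg (fun hc => hi ((memR1_iff i).mpr (by omega)))]
    have hRR : R ++ [] = R1 ++ R2 := by simp [hRsplit]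
    have hbtwn' : Btwn (M ++ k :: (R1 ++ R2)) := by
      have h := btwn_cons hbtwn
      rwa [hRR] at h
    have bM : Btwn M := btwn_append_left hbtwn'
    have b23 : Btwn (R1 ++ R2) := btwn_cons (btwn_append_right hbtwn')
    have bR1 : Btwn R1 := btwn_append_left b23
    have bR2 : Btwn R2 := btwn_append_right b23
    have havoid' : AvoidP (M ++ k :: (R1 ++ R2)) := by
      have h := avoidP_cons havoid
      rwa [hRR] at h
    have aM : AvoidP M := avoidP_append_left havoid'
    have a23 : AvoidP (R1 ++ R2) := avoidP_cons (avoidP_append_right havoid')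
    have aR1 : AvoidP R1 := avoidP_append_left a23
    have aR2 : AvoidP R2 := avoidP_append_right a23
    obtain ⟨ta, hsa, hwa⟩ := IH (b + m - K) (by omega) M K cM bM aM
    obtain ⟨tb, hsb, hwb⟩ := IH (K - k) (by omega) R1 k cR1 bR1 aR1
    obtain ⟨tc, hsc, hwc⟩ := IH (k - 1 - b) (by omega) R2 b cR2 bR2 aR2
    refine ⟨TT.node ta tb tc, by simp only [TT.size, hsa, hsb, hsc]; omega, ?_⟩
    have hshape : (TT.node ta tb tc).toWord b = (b + tc.size + 1) ::
        (ta.toWord (b + tc.size + 1 + tb.size) ++ (b + tc.size + 1) ::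
          (tb.toWord (b + tc.size + 1) ++ tc.toWord b)) := rfl
    rw [hshape, hsc, hsb, show b + (k - 1 - b) + 1 = k by omega,
      show k + (K - k) = K by omega, hwa, hwb, hwc, hrest, hRsplit]

end Part5

section Part6
open TT

lemma append_cons_eq_append_cons {k : ℕ} :
    ∀ {u1 u2 v1 v2 : List ℕ}, k ∉ u1 → k ∉ u2 →
      u1 ++ k :: v1 = u2 ++ k :: v2 → u1 = u2 ∧ v1 = v2 := by
  intro u1
  induction u1 with
  | nil =>
    intro u2 v1 v2 _ h2 heq
    cases u2 with
    | nil => simpa using heq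
    | cons y u2' =>
      simp only [List.nil_append, List.cons_append, List.cons.injEq] at heq
      exact absurd (heq.1 ▸ List.mem_cons_self (a := y) (l := u2')) h2
  | cons x u1' ih =>
    intro u2 v1 v2 h1 h2 heq
    cases u2 with
    | nil =>
      simp only [List.cons_append, List.nil_append, List.cons.injEq] at heq
      exact absurd (heq.1 ▸ List.mem_cons_self (a := x) (l := u1')) h1
    | cons y u2' =>
      simp only [List.cons_append, List.cons.injEq] at heq
      obtain ⟨rfl, heq2⟩ := heq
      have := ih (fun hc => h1 (List.mem_cons_of_mem _ hc))
        (fun hc => h2 (List.mem_cons_of_mem _ hc)) heq2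
      exact ⟨by rw [this.1], this.2⟩

lemma toWord_injective : ∀ (t s : TT) (b : ℕ), t.toWord b = s.toWord b → t = s := by
  intro t
  induction t with
  | nil =>
    intro s b h
    exact (toWord_eq_nil.mp (h ▸ rfl : s.toWord b = [])).symm
  | node a b' c iha ihb ihc =>
    intro s β h
    cases s with
    | nil => exact absurd (toWord_eq_nil.mp h) (by simp)
    | node a2 b2 c2 =>
      simp only [toWord, List.cons.injEq] at h
      obtain ⟨hk, htail⟩ := h
      have hcsize : c.size = c2.size := by omega
      rw [hcsize] at htail
      have hkA1 : (β + c2.size + 1) ∉ a.toWord (β + c2.size + 1 + b'.size) := by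
        intro hc
        have := mem_toWord hc
        omega
      have hkA2 : (β + c2.size + 1) ∉ a2.toWord (β + c2.size + 1 + b2.size) := by
        intro hc
        have := mem_toWord hc
        omega
      obtain ⟨hA, hBC⟩ := append_cons_eq_append_cons hkA1 hkA2 htail
      have hlenC : (c.toWord β).length = (c2.toWord β).length := by
        rw [length_toWord, length_toWord, hcsize]
      obtain ⟨hB, hC⟩ := List.append_inj' hBC (by
        have := congrArg List.length hBC
        simp only [List.length_append] at this
        omega)
      have hbsize : b'.size = b2.size := by
        have := congrArg List.length hB
        rw [length_toWord, length_toWord] at this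
        omega
      rw [hbsize] at hA
      have e1 : a = a2 := iha _ _ hA
      have e2 : b' = b2 := ihb _ _ hB
      have e3 : c = c2 := ihc _ _ hC
      rw [e1, e2, e3]

def sw23 : TT → TT
  | TT.nil => TT.nil
  | TT.node a b c => TT.node (sw23 a) (sw23 c) (sw23 b)

def sw12 : TT → TT
  | TT.nil => TT.nil
  | TT.node a b c => TT.node (sw12 b) (sw12 a) (sw12 c)

lemma sw23_nil_iff {t : TT} : sw23 t = TT.nil ↔ t = TT.nil := by cases t <;> simp [sw23]
lemma sw12_nil_iff {t : TT} : sw12 t = TT.nil ↔ t = TT.nil := by cases t <;> simp [sw12]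

lemma sw23_invol (t : TT) : sw23 (sw23 t) = t := by
  induction t with
  | nil => rfl
  | node a b c iha ihb ihc => simp [sw23, iha, ihb, ihc]

lemma sw12_invol (t : TT) : sw12 (sw12 t) = t := by
  induction t with
  | nil => rfl
  | node a b c iha ihb ihc => simp [sw12, iha, ihb, ihc]

lemma sw23_stats (t : TT) : (sw23 t).size = t.size ∧ (sw23 t).c1 = t.c1 ∧
    (sw23 t).c2 = t.c3 ∧ (sw23 t).c3 = t.c2 := by
  induction t with
  | nil => simp [sw23, size, c1, c2, c3]
  | node a b c iha ihb ihc =>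
    simp only [sw23, size, c1, c2, c3, iha.1, iha.2.1, iha.2.2.1, iha.2.2.2,
      ihb.1, ihb.2.1, ihb.2.2.1, ihb.2.2.2, ihc.1, ihc.2.1, ihc.2.2.1, ihc.2.2.2,
      sw23_nil_iff]
    omega

lemma sw12_stats (t : TT) : (sw12 t).size = t.size ∧ (sw12 t).c1 = t.c2 ∧
    (sw12 t).c2 = t.c1 ∧ (sw12 t).c3 = t.c3 := by
  induction t with
  | nil => simp [sw12, size, c1, c2, c3]
  | node a b c iha ihb ihc =>
    simp only [sw12, size, c1, c2, c3, iha.1, iha.2.1, iha.2.2.1, iha.2.2.2,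
      ihb.1, ihb.2.1, ihb.2.2.1, ihb.2.2.2, ihc.1, ihc.2.1, ihc.2.2.1, ihc.2.2.2,
      sw12_nil_iff]
    omega

def Tset (n x y z : ℕ) : Set TT :=
  {t | t.size = n ∧ t.size = t.c1 + x ∧ y = t.c1 + t.c3 + 1 ∧ z = t.c1 + t.c2 + 1}

lemma g23 (n x y z : ℕ) : (Tset n x y z).ncard = (Tset n x z y).ncard := by
  have h23 : ∀ t, sw23 t ∈ Tset n x y z ↔ t ∈ Tset n x z y := by
    intro t
    obtain ⟨h1, h2, h3, h4⟩ := sw23_stats t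
    simp only [Tset, Set.mem_setOf_eq, h1, h2, h3, h4]
    tauto
  have him : sw23 '' Tset n x z y = Tset n x y z := by
    ext t
    constructor
    · rintro ⟨s, hs, rfl⟩
      exact (h23 s).mpr hs
    · intro ht
      exact ⟨sw23 t, by
        have h23' : ∀ t, sw23 t ∈ Tset n x z y ↔ t ∈ Tset n x y z := by
          intro t
          obtain ⟨h1, h2, h3, h4⟩ := sw23_stats t
          simp only [Tset, Set.mem_setOf_eq, h1, h2, h3, h4]
          tauto
        exact (h23' t).mpr ht, sw23_invol t⟩
  rw [← him, Set.ncard_image_of_injective _ (Function.Involutive.injective sw23_invol)]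

lemma g12 (n x y z : ℕ) (hn : 1 ≤ n) : (Tset n x y z).ncard = (Tset n y x z).ncard := by
  have h12 : ∀ t x y z, sw12 t ∈ Tset n x y z ↔ t ∈ Tset n y x z := by
    intro t x y z
    obtain ⟨h1, h2, h3, h4⟩ := sw12_stats t
    simp only [Tset, Set.mem_setOf_eq, h1, h2, h3, h4]
    constructor
    · rintro ⟨e1, e2, e3, e4⟩
      have hnil : t ≠ TT.nil := by
        intro hh
        rw [hh] at e1
        simp [size] at e1
        omega
      have hcs := csum t
      rw [if_neg hnil] at hcs
      exact ⟨e1, by omega, by omega, by omega⟩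
    · rintro ⟨e1, e2, e3, e4⟩
      have hnil : t ≠ TT.nil := by
        intro hh
        rw [hh] at e1
        simp [size] at e1
        omega
      have hcs := csum t
      rw [if_neg hnil] at hcs
      exact ⟨e1, by omega, by omega, by omega⟩
  have him : sw12 '' Tset n y x z = Tset n x y z := by
    ext t
    constructor
    · rintro ⟨s, hs, rfl⟩
      exact (h12 s x y z).mpr hs
    · intro ht
      exact ⟨sw12 t, (h12 t y x z).mpr ht, sw12_invol t⟩
  rw [← him, Set.ncard_image_of_injective _ (Function.Involutive.injective sw12_invol)]

end Part6

section Part7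
open TT

lemma set_eq (n a b c : ℕ) :
    {σ : List ℕ | IsStirling n σ ∧ Avoids σ [2, 1, 3] ∧
      platStat σ = a ∧ desStat σ + 1 = b ∧ ascStat σ + 1 = c} =
    (fun t : TT => t.toWord 0) '' Tset n a b c := by
  ext σ
  simp only [Set.mem_setOf_eq, Set.mem_image]
  constructor
  · rintro ⟨⟨hcnt, hbt⟩, hav, hp, hd, ha⟩
    have hc0 : ∀ i, σ.count i = if 0 < i ∧ i ≤ 0 + n then 2 else 0 := by
      intro i
      rw [hcnt i]
      split_ifs <;> omega
    obtain ⟨t, hts, htw⟩ := structure_thm n σ 0 hc0 hbt ((avoids_213_iff σ).mp hav)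
    obtain ⟨s1, s2, s3⟩ := stats_toWord t 0
    rw [htw] at s1 s2 s3
    simp only [platStat, statCount_eq] at hp
    simp only [desStat, statCount_eq] at hd
    simp only [ascStat, statCount_eq] at ha
    exact ⟨t, ⟨hts, by omega, by omega, by omega⟩, htw⟩
  · rintro ⟨t, ⟨hts, h1, h2, h3⟩, rfl⟩
    obtain ⟨s1, s2, s3⟩ := stats_toWord t 0
    refine ⟨⟨?_, btwn_toWord t 0⟩, (avoids_213_iff _).mpr (avoidP_toWord t 0), ?_, ?_, ?_⟩
    · intro i
      rw [count_toWord t 0 i, hts]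
      split_ifs <;> omega
    · simp only [platStat, statCount_eq]; omega
    · simp only [desStat, statCount_eq]; omega
    · simp only [ascStat, statCount_eq]; omega

lemma pair_cases {b' c' b c : ℕ} (h : b' ::ₘ c' ::ₘ 0 = b ::ₘ c ::ₘ (0 : Multiset ℕ)) :
    (b' = b ∧ c' = c) ∨ (b' = c ∧ c' = b) := by
  by_cases h1 : b' = b
  · subst h1
    rw [Multiset.cons_inj_right, Multiset.cons_zero, Multiset.cons_zero] at h
    exact Or.inl ⟨rfl, Multiset.singleton_inj.mp h⟩
  · have hb : b' ∈ (b ::ₘ c ::ₘ (0 : Multiset ℕ)) := by rw [← h]; simp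
    simp only [Multiset.mem_cons, Multiset.notMem_zero, or_false] at hb
    have h2 : b' = c := by tauto
    subst h2
    rw [Multiset.cons_swap b b', Multiset.cons_inj_right, Multiset.cons_zero,
      Multiset.cons_zero] at h
    exact Or.inr ⟨rfl, Multiset.singleton_inj.mp h⟩

lemma triple_cases {a' b' c' a b c : ℕ} (h : ({a', b', c'} : Multiset ℕ) = {a, b, c}) :
    (a' = a ∧ b' = b ∧ c' = c) ∨ (a' = a ∧ b' = c ∧ c' = b) ∨
    (a' = b ∧ b' = a ∧ c' = c) ∨ (a' = b ∧ b' = c ∧ c' = a) ∨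
    (a' = c ∧ b' = a ∧ c' = b) ∨ (a' = c ∧ b' = b ∧ c' = a) := by
  simp only [Multiset.insert_eq_cons, ← Multiset.cons_zero] at h
  by_cases h1 : a' = a
  · subst h1
    rw [Multiset.cons_inj_right] at h
    rcases pair_cases h with ⟨e1, e2⟩ | ⟨e1, e2⟩
    · exact Or.inl ⟨rfl, e1, e2⟩
    · exact Or.inr (Or.inl ⟨rfl, e1, e2⟩)
  · have hmem : a' ∈ (a ::ₘ b ::ₘ c ::ₘ (0 : Multiset ℕ)) := by rw [← h]; simp
    simp only [Multiset.mem_cons, Multiset.notMem_zero, or_false] at hmem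
    by_cases h2 : a' = b
    · subst h2
      rw [Multiset.cons_swap a a', Multiset.cons_inj_right] at h
      rcases pair_cases h with ⟨e1, e2⟩ | ⟨e1, e2⟩
      · exact Or.inr (Or.inr (Or.inl ⟨rfl, e1, e2⟩))
      · exact Or.inr (Or.inr (Or.inr (Or.inl ⟨rfl, e1, e2⟩)))
    · have h3 : a' = c := by tauto
      subst h3
      rw [Multiset.cons_swap b a', Multiset.cons_swap a a', Multiset.cons_inj_right] at h
      rcases pair_cases h with ⟨e1, e2⟩ | ⟨e1, e2⟩
      · exact Or.inr (Or.inr (Or.inr (Or.inr (Or.inl ⟨rfl, e1, e2⟩))))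
      · exact Or.inr (Or.inr (Or.inr (Or.inr (Or.inr ⟨rfl, e1, e2⟩))))

/-- Joint symmetry of (plat, des+1, asc+1) on 213-avoiding Stirling permutations. -/
theorem stirling213_triple_symmetric (n : ℕ) (hn : 1 ≤ n)
    (a b c a' b' c' : ℕ) (h : ({a', b', c'} : Multiset ℕ) = {a, b, c}) :
    {σ : List ℕ | IsStirling n σ ∧ Avoids σ [2, 1, 3] ∧
      platStat σ = a ∧ desStat σ + 1 = b ∧ ascStat σ + 1 = c}.ncard =
    {σ : List ℕ | IsStirling n σ ∧ Avoids σ [2, 1, 3] ∧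
      platStat σ = a' ∧ desStat σ + 1 = b' ∧ ascStat σ + 1 = c'}.ncard := by
  have hinj : Function.Injective (fun t : TT => t.toWord 0) :=
    fun t s hts => toWord_injective t s 0 hts
  rw [set_eq n a b c, set_eq n a' b' c', Set.ncard_image_of_injective _ hinj,
    Set.ncard_image_of_injective _ hinj]
  rcases triple_cases h with ⟨e1, e2, e3⟩ | ⟨e1, e2, e3⟩ | ⟨e1, e2, e3⟩ |
    ⟨e1, e2, e3⟩ | ⟨e1, e2, e3⟩ | ⟨e1, e2, e3⟩ <;> rw [e1, e2, e3]
  · exact g23 n a b c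
  · exact g12 n a b c hn
  · exact (g12 n a b c hn).trans (g23 n b a c)
  · exact (g23 n a b c).trans (g12 n a c b hn)
  · exact (g23 n a b c).trans ((g12 n a c b hn).trans (g23 n c a b))

end Part7
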